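/- arXiv:2411.00198 — 2 statements merged into one kernel-verified Lean document; each statement's English description precedes it below -/
import Mathlib

section
/- The truncated Gaussian kernel k̃(x,x') = exp(-(‖x‖²+‖x'‖²)/(2σ²)) Σ_{n=0}^{r} (⟨x,x'⟩/σ²)ⁿ/n! is a positive semi-definite kernel on ℝᵈ: for any finite set of points x₁,…,x_m ∈ ℝᵈ and scalars c₁,…,c_m ∈ ℝ, Σ_{i,j} cᵢcⱼ k̃(xᵢ,xⱼ) ≥ 0. -/
lemma aux_posSemidef {m d : ℕ} (n : ℕ) (a : Fin m → ℝ) (w : Fin m → Fin d → ℝ) :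
    0 ≤ ∑ i, ∑ j, a i * a j * (∑ k, w i k * w j k) ^ n := by
  have h : ∀ i j : Fin m, (∑ k, w i k * w j k) ^ n
      = ∑ p : Fin n → Fin d, (∏ t, w i (p t)) * (∏ t, w j (p t)) := by
    intro i j
    rw [Fintype.sum_pow]
    exact Finset.sum_congr rfl fun p _ => Finset.prod_mul_distrib
  calc (0:ℝ) ≤ ∑ p : Fin n → Fin d, (∑ i, a i * ∏ t, w i (p t)) ^ 2 :=
        Finset.sum_nonneg fun p _ => sq_nonneg _
    _ = ∑ i, ∑ j, a i * a j * (∑ k, w i k * w j k) ^ n := by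
        simp_rw [h, sq, Finset.sum_mul, Finset.mul_sum]
        rw [Finset.sum_comm]
        refine Finset.sum_congr rfl fun i _ => ?_
        rw [Finset.sum_comm]
        refine Finset.sum_congr rfl fun j _ => Finset.sum_congr rfl fun p _ => by ring

theorem truncated_gaussian_kernel_posSemidef (d : ℕ) (σ : ℝ) (hσ : 0 < σ) (r : ℕ)
    (m : ℕ) (x : Fin m → EuclideanSpace ℝ (Fin d)) (c : Fin m → ℝ) :
    0 ≤ ∑ i, ∑ j, c i * c j *
        (Real.exp (-(‖x i‖ ^ 2 + ‖x j‖ ^ 2) / (2 * σ ^ 2)) *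
          ∑ n ∈ Finset.range (r + 1),
            (1 / (n.factorial : ℝ)) * ((inner ℝ (x i) (x j) : ℝ) / σ ^ 2) ^ n) := by
  set a : Fin m → ℝ := fun i => c i * Real.exp (-‖x i‖ ^ 2 / (2 * σ ^ 2)) with ha
  set w : Fin m → Fin d → ℝ := fun i k => x i k / σ with hw
  have hinner : ∀ i j : Fin m, (inner ℝ (x i) (x j) : ℝ) / σ ^ 2 = ∑ k, w i k * w j k := by
    intro i j
    rw [PiLp.inner_apply]
    simp only [RCLike.inner_apply, conj_trivial, hw]
    rw [Finset.sum_div]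
    refine Finset.sum_congr rfl fun k _ => ?_
    rw [div_mul_div_comm, ← sq, mul_comm]
  have hexp : ∀ i j : Fin m,
      Real.exp (-(‖x i‖ ^ 2 + ‖x j‖ ^ 2) / (2 * σ ^ 2))
        = Real.exp (-‖x i‖ ^ 2 / (2 * σ ^ 2)) * Real.exp (-‖x j‖ ^ 2 / (2 * σ ^ 2)) := by
    intro i j
    rw [← Real.exp_add]
    ring_nf
  have key : ∑ i, ∑ j, c i * c j *
        (Real.exp (-(‖x i‖ ^ 2 + ‖x j‖ ^ 2) / (2 * σ ^ 2)) *
          ∑ n ∈ Finset.range (r + 1),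
            (1 / (n.factorial : ℝ)) * ((inner ℝ (x i) (x j) : ℝ) / σ ^ 2) ^ n)
      = ∑ n ∈ Finset.range (r + 1), (1 / (n.factorial : ℝ)) *
          ∑ i, ∑ j, a i * a j * (∑ k, w i k * w j k) ^ n := by
    simp_rw [hinner, hexp, Finset.mul_sum]
    conv_lhs => enter [2, i]; rw [Finset.sum_comm]
    rw [Finset.sum_comm]
    refine Finset.sum_congr rfl fun n _ => ?_
    refine Finset.sum_congr rfl fun i _ => Finset.sum_congr rfl fun j _ => ?_
    simp only [ha]
    ring
  rw [key]
  refine Finset.sum_nonneg fun n _ => mul_nonneg (by positivity) (aux_posSemidef n a w)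
end

section
/- If the prior covariance P⁻ is symmetric positive semi-definite, H is any matrix, R = σ_y²I with σ_y > 0, and K = P⁻Hᵀ(HP⁻Hᵀ + R)⁻¹, then the posterior covariance P⁺ = (I - KH)P⁻ is symmetric and positive semi-definite. -/
open Matrix

theorem kalman_posterior_covariance_posSemidef (n m : ℕ)
    (P : Matrix (Fin n) (Fin n) ℝ) (hP : P.PosSemidef)
    (H : Matrix (Fin m) (Fin n) ℝ) (σy : ℝ) (hσy : 0 < σy) :
    ((1 - (P * Hᵀ * (H * P * Hᵀ + σy ^ 2 • (1 : Matrix (Fin m) (Fin m) ℝ))⁻¹) * H) * P).PosSemidef := by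
  obtain ⟨S, hSdef⟩ : ∃ S, S = H * P * Hᵀ + σy ^ 2 • (1 : Matrix (Fin m) (Fin m) ℝ) := ⟨_, rfl⟩
  rw [← hSdef]
  have hHPH : (H * P * Hᵀ).PosSemidef := by
    have := hP.mul_mul_conjTranspose_same H
    simpa [Matrix.conjTranspose_eq_transpose_of_trivial, Matrix.mul_assoc] using this
  have hsm : ((σy ^ 2) • (1 : Matrix (Fin m) (Fin m) ℝ)).PosDef := by
    rw [smul_one_eq_diagonal]
    exact posDef_diagonal_iff.mpr fun i => by positivity
  have hS : S.PosDef := hSdef ▸ Matrix.PosDef.posSemidef_add hHPH hsm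
  have hSinv : IsUnit S.det := (Matrix.isUnit_iff_isUnit_det S).mp hS.isUnit
  obtain ⟨K, hKdef⟩ : ∃ K, K = P * Hᵀ * S⁻¹ := ⟨_, rfl⟩
  rw [← hKdef]
  have hKS : K * S = P * Hᵀ := by
    rw [hKdef, Matrix.mul_assoc, Matrix.nonsing_inv_mul S hSinv, Matrix.mul_one]
  have hPsymm : Pᵀ = P := by
    have := hP.isHermitian
    exact (by simpa [Matrix.conjTranspose_eq_transpose_of_trivial] using this : P.IsSymm)
  have h3 : P * (Hᵀ * Kᵀ) = K * (H * (P * (Hᵀ * Kᵀ))) + σy ^ 2 • (K * Kᵀ) := by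
    have h := congrArg (· * Kᵀ) hKS
    simp only [hSdef, Matrix.add_mul, Matrix.mul_add, Matrix.smul_mul, Matrix.mul_smul,
      Matrix.one_mul, Matrix.mul_assoc, smul_smul] at h
    exact h.symm
  have key : (1 - K * H) * P = (1 - K * H) * P * (1 - K * H)ᵀ + (σy ^ 2) • (K * Kᵀ) := by
    simp only [Matrix.sub_mul, Matrix.mul_sub, Matrix.one_mul, Matrix.mul_one,
      Matrix.transpose_sub, Matrix.transpose_mul, Matrix.transpose_one, hPsymm, Matrix.mul_assoc]
    have h3' : K * (H * (P * (Hᵀ * Kᵀ))) = P * (Hᵀ * Kᵀ) - σy ^ 2 • (K * Kᵀ) :=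
      eq_sub_of_add_eq h3.symm
    rw [h3']; abel
  rw [key]
  have h1 : ((1 - K * H) * P * (1 - K * H)ᵀ).PosSemidef := by
    have := hP.mul_mul_conjTranspose_same (1 - K * H)
    simpa [Matrix.conjTranspose_eq_transpose_of_trivial, Matrix.mul_assoc] using this
  have h2 : ((σy ^ 2) • (K * Kᵀ)).PosSemidef := by
    have := Matrix.posSemidef_self_mul_conjTranspose (σy • K)
    simpa [Matrix.conjTranspose_eq_transpose_of_trivial, Matrix.smul_mul, Matrix.mul_smul,
      smul_smul, sq] using this
  exact h1.add h2
end
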